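/- arXiv:1008.5007 — 2 statements merged into one kernel-verified Lean document; each statement's English description precedes it below -/
import Mathlib

section
/- Let G be an n-dimensional torus whose Lie algebra 𝔤 is equipped with a Euclidean inner product such that the intersection of the integral lattice 𝔤_ℤ with the lattice generated by some orthonormal basis is a sublattice of rank n (a 'rational' metric). Then for every closed subgroup H of G, the image H^⊥ of the orthogonal complement of Lie(H) under the exponential map is a compact connected subgroup of G, and the intersection H ∩ H^⊥ is a finite set. -/
/-!
Let `Γ ⊆ 𝔤` be the preimage of `H` and `W` the largest subspace contained in `Γ`, i.e. `Lie H`.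
Near `0`, `Γ` meets `Wᗮ` only in `0`: a sequence of small nonzero elements of `Γ ∩ Wᗮ` has a
limit direction whose whole line lies in `Γ`, hence in `W ∩ Wᗮ`. So `Γ ∩ Wᗮ` is discrete.
A pigeonhole argument on the multiples of a vector of `W` orthogonal to the lattice points of `W`
shows that `W` is spanned by lattice points. For a rational metric the lattice `Λ₀ = ℤb ∩ Λ` has
integral inner products, and `Wᗮ` is the largest subspace of the closed group
`{x | ⟪y, x⟫ ∈ ℤ for all y ∈ Λ₀ ∩ W}`, which contains `Λ₀`; so `Wᗮ` is spanned by lattice points as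
well. Then `H^⊥ = exp Wᗮ` is the image of a bounded part of `Wᗮ`, hence compact, and `H ∩ H^⊥` is
the image of the finitely many points of the discrete group `Γ ∩ Wᗮ` in that bounded part.
-/

open Set Filter Topology Metric Submodule
open scoped InnerProductSpace

theorem tendsto_floor_div_mul {ι : Type*} {l : Filter ι} {r : ι → ℝ} (hr0 : ∀ k, 0 < r k)
    (hr : Tendsto r l (𝓝 0)) (t : ℝ) : Tendsto (fun k => (⌊t / r k⌋ : ℝ) * r k) l (𝓝 t) := by
  have hle : ∀ k, (⌊t / r k⌋ : ℝ) * r k ≤ t := fun k =>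
    (le_div_iff₀ (hr0 k)).mp (Int.floor_le _)
  have hge : ∀ k, t - r k ≤ (⌊t / r k⌋ : ℝ) * r k := fun k => by
    have := (div_lt_iff₀ (hr0 k)).mp (Int.lt_floor_add_one (t / r k))
    linarith
  refine tendsto_of_tendsto_of_tendsto_of_le_of_le ?_ tendsto_const_nhds hge hle
  simpa using tendsto_const_nhds.sub hr

namespace AddSubgroup

variable {E : Type*}

section Module

variable [AddCommGroup E] [Module ℝ E]

/-- The largest subspace contained in `Γ`; for closed `Γ` this is its Lie algebra. -/
def lineality (Γ : AddSubgroup E) : Submodule ℝ E where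
  carrier := {ξ | ∀ t : ℝ, t • ξ ∈ Γ}
  add_mem' hx hy t := by simpa only [smul_add] using Γ.add_mem (hx t) (hy t)
  zero_mem' t := by simpa only [smul_zero] using Γ.zero_mem
  smul_mem' c _ hx t := by simpa only [smul_smul] using hx (t * c)

variable {Γ : AddSubgroup E}

theorem lineality_le : Γ.lineality.toAddSubgroup ≤ Γ := fun x hx => by simpa using hx 1

end Module

section Normed

variable [NormedAddCommGroup E] [NormedSpace ℝ E] {Γ : AddSubgroup E}

theorem mem_lineality_of_tendsto {ι : Type*} {l : Filter ι} [l.NeBot]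
    (hΓ : IsClosed (Γ : Set E)) {y : ι → E} (hyΓ : ∀ k, y k ∈ Γ) (hy0 : ∀ k, y k ≠ 0)
    (hy : Tendsto y l (𝓝 0)) {a : E} (ha : Tendsto (fun k => ‖y k‖⁻¹ • y k) l (𝓝 a)) :
    a ∈ Γ.lineality := by
  intro t
  have hcoef :=
    tendsto_floor_div_mul (fun k => norm_pos_iff.mpr (hy0 k)) (tendsto_norm_zero.comp hy) t
  refine hΓ.mem_of_tendsto (hcoef.smul ha) (Eventually.of_forall fun k => ?_)
  have hk : ‖y k‖ ≠ 0 := norm_ne_zero_iff.mpr (hy0 k)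
  rw [smul_smul, mul_assoc, mul_inv_cancel₀ hk, mul_one, Int.cast_smul_eq_zsmul]
  exact Γ.zsmul_mem (hyΓ k) _

theorem exists_norm_sub_le_of_mem_span [FiniteDimensional ℝ E] (Λ : AddSubgroup E) :
    ∃ R, ∀ x ∈ span ℝ (Λ : Set E), ∃ y ∈ Λ, ‖x - y‖ ≤ R := by
  classical
  obtain ⟨b, hbΛ, hspan, hli⟩ := exists_linearIndependent ℝ (Λ : Set E)
  set T := hli.setFinite.toFinset
  refine ⟨∑ v ∈ T, ‖v‖, fun x hx => ?_⟩
  rw [← hspan, ← hli.setFinite.coe_toFinset, mem_span_finset] at hx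
  obtain ⟨f, -, rfl⟩ := hx
  refine ⟨∑ v ∈ T, ⌊f v⌋ • v, sum_mem fun v hv => Λ.zsmul_mem (hbΛ (by simpa [T] using hv)) _, ?_⟩
  calc ‖∑ v ∈ T, f v • v - ∑ v ∈ T, ⌊f v⌋ • v‖ = ‖∑ v ∈ T, Int.fract (f v) • v‖ := by
        simp only [← Finset.sum_sub_distrib, ← Int.cast_smul_eq_zsmul ℝ, ← sub_smul, Int.fract]
    _ ≤ ∑ v ∈ T, ‖v‖ := by
        refine norm_sum_le_of_le _ fun v _ => ?_
        rw [norm_smul, Real.norm_of_nonneg (Int.fract_nonneg _)]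
        exact mul_le_of_le_one_left (norm_nonneg v) (Int.fract_lt_one _).le

end Normed

section InnerProduct

variable [NormedAddCommGroup E] [InnerProductSpace ℝ E] [FiniteDimensional ℝ E]
  {Λ Γ : AddSubgroup E}

theorem exists_pos_forall_mem_orthogonal_lineality_norm_lt (hΓ : IsClosed (Γ : Set E)) :
    ∃ ε > 0, ∀ x ∈ Γ, x ∈ Γ.linealityᗮ → ‖x‖ < ε → x = 0 := by
  by_contra! h
  choose y hyΓ hyW hy hy0 using fun k : ℕ => h (1 / (k + 1)) Nat.one_div_pos_of_nat
  have hy_zero : Tendsto y atTop (𝓝 0) :=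
    squeeze_zero_norm (fun k => (hy k).le) tendsto_one_div_add_atTop_nhds_zero_nat
  have hsphere : ∀ k, ‖y k‖⁻¹ • y k ∈ sphere (0 : E) 1 := fun k => by
    simp [norm_smul, hy0 k]
  obtain ⟨a, ha, φ, hφ, hlim⟩ := (isCompact_sphere (0 : E) 1).tendsto_subseq hsphere
  have haW : a ∈ Γ.lineality := mem_lineality_of_tendsto hΓ (fun k => hyΓ (φ k))
    (fun k => hy0 (φ k)) (hy_zero.comp hφ.tendsto_atTop) hlim
  have haW' : a ∈ Γ.linealityᗮ := Γ.lineality.isClosed_orthogonal.mem_of_tendsto hlim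
    (Eventually.of_forall fun k => Γ.linealityᗮ.smul_mem _ (hyW (φ k)))
  have : a = 0 := by simpa using (Γ.lineality.inf_orthogonal_eq_bot).le ⟨haW, haW'⟩
  simp [this] at ha

theorem finite_inter_orthogonal_lineality_inter_closedBall (hΓ : IsClosed (Γ : Set E)) (R : ℝ) :
    ((Γ : Set E) ∩ Γ.linealityᗮ ∩ closedBall 0 R).Finite := by
  obtain ⟨ε, hε, hsmall⟩ := exists_pos_forall_mem_orthogonal_lineality_norm_lt hΓ
  set Δ := Γ ⊓ Γ.linealityᗮ.toAddSubgroup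
  have hΔ : DiscreteTopology Δ := by
    refine discreteTopology_iff_isOpen_singleton_zero.mpr ⟨ball 0 ε, isOpen_ball, ?_⟩
    ext ⟨x, hxΓ, hxW⟩
    simp only [mem_preimage, mem_ball_zero_iff, mem_singleton_iff, Subtype.ext_iff,
      ZeroMemClass.coe_zero]
    exact ⟨hsmall x hxΓ hxW, fun h => by simpa [h] using hε⟩
  rw [inter_comm]
  exact finite_isBounded_inter_isClosed (isDiscrete_iff_discreteTopology.mpr hΔ)
    isBounded_closedBall (hΓ.inter Γ.lineality.isClosed_orthogonal)

theorem starProjection_orthogonal_lineality_mem {y : E} (hy : y ∈ Γ) :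
    Γ.linealityᗮ.starProjection y ∈ Γ := by
  have h : y - Γ.linealityᗮ.starProjection y ∈ Γ.lineality := by simp
  simpa using Γ.sub_mem hy (lineality_le h)

theorem eq_zero_of_mem_lineality_of_forall_inner_eq_zero (hΓ : IsClosed (Γ : Set E))
    (hΛ : span ℝ (Λ : Set E) = ⊤) (hΛΓ : Λ ≤ Γ) {u : E} (hu : u ∈ Γ.lineality)
    (huΛ : ∀ δ ∈ Λ, δ ∈ Γ.lineality → ⟪δ, u⟫_ℝ = 0) : u = 0 := by
  by_contra hu0
  set W := Γ.lineality
  set q := Wᗮ.starProjection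
  obtain ⟨R, hR⟩ := exists_norm_sub_le_of_mem_span Λ
  have hu2 : 0 < ‖u‖ ^ 2 := by positivity
  set L := (2 * R * ‖u‖ + 1) / ‖u‖ ^ 2
  choose v hvΛ hvR using fun k : ℕ => hR ((k * L) • u) (by simp [hΛ])
  have hq : ∀ k, q (v k) ∈ (Γ : Set E) ∩ Wᗮ ∩ closedBall 0 R := fun k => by
    refine ⟨⟨starProjection_orthogonal_lineality_mem (hΛΓ (hvΛ k)),
      Wᗮ.starProjection_apply_mem _⟩, ?_⟩
    have : q (v k) = -q ((k * L) • u - v k) := by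
      rw [map_sub, starProjection_orthogonal_apply_eq_zero (W.smul_mem _ hu), zero_sub, neg_neg]
    rw [mem_closedBall_zero_iff, this, norm_neg]
    exact (Wᗮ.norm_starProjection_apply_le _).trans (hvR k)
  obtain ⟨i, j, hij, hqij⟩ := Set.Finite.exists_lt_map_eq_of_forall_mem hq
    (finite_inter_orthogonal_lineality_inter_closedBall hΓ R)
  have hvW : v j - v i ∈ W := by
    rw [← W.orthogonal_orthogonal, ← starProjection_apply_eq_zero_iff, map_sub, hqij, sub_self]
  have hinner := huΛ _ (Λ.sub_mem (hvΛ j) (hvΛ i)) hvW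
  -- `v j - v i` is `(j - i) L u` up to an error of norm at most `2 R`, whose pairing with `u` is
  -- too small to cancel `(j - i) L ‖u‖²`.
  set e := fun k : ℕ => (k * L) • u - v k
  have hv : v j - v i = ((j - i : ℝ) * L) • u - (e j - e i) := by
    simp only [e, sub_mul, sub_smul]; abel
  have he : |⟪e j - e i, u⟫_ℝ| ≤ 2 * R * ‖u‖ := by
    refine (abs_real_inner_le_norm _ _).trans (mul_le_mul_of_nonneg_right ?_ (norm_nonneg u))
    linarith [norm_sub_le (e j) (e i), hvR j, hvR i]
  have hL : L * ‖u‖ ^ 2 = 2 * R * ‖u‖ + 1 := div_mul_cancel₀ _ hu2.ne'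
  have hji : (1 : ℝ) ≤ j - i := by
    have : (i : ℝ) + 1 ≤ j := by exact_mod_cast hij
    linarith
  rw [hv, inner_sub_left, real_inner_smul_left, real_inner_self_eq_norm_sq, mul_assoc, hL] at hinner
  nlinarith [abs_le.mp he, norm_nonneg u]

theorem span_inter_lineality_eq (hΓ : IsClosed (Γ : Set E)) (hΛ : span ℝ (Λ : Set E) = ⊤)
    (hΛΓ : Λ ≤ Γ) : span ℝ ((Λ : Set E) ∩ Γ.lineality) = Γ.lineality := by
  set W₁ := span ℝ ((Λ : Set E) ∩ Γ.lineality)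
  have hW₁ : W₁ ≤ Γ.lineality := span_le.mpr inter_subset_right
  have hbot : W₁ᗮ ⊓ Γ.lineality = ⊥ := eq_bot_iff.mpr fun u hu =>
    eq_zero_of_mem_lineality_of_forall_inner_eq_zero hΓ hΛ hΛΓ hu.2 fun _ hδΛ hδ =>
      inner_right_of_mem_orthogonal (subset_span (mem_inter hδΛ hδ)) hu.1
  simpa [hbot] using sup_orthogonal_inf_of_hasOrthogonalProjection hW₁

end InnerProduct

end AddSubgroup

section IntegralDual

variable {E : Type*} [NormedAddCommGroup E] [InnerProductSpace ℝ E]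

def integralDual (S : Set E) : AddSubgroup E where
  carrier := {x | ∀ y ∈ S, ⟪y, x⟫_ℝ ∈ range ((↑) : ℤ → ℝ)}
  add_mem' {a b} ha hb y hy := by
    obtain ⟨m, hm⟩ := ha y hy
    obtain ⟨k, hk⟩ := hb y hy
    exact ⟨m + k, by rw [inner_add_right, ← hm, ← hk, Int.cast_add]⟩
  zero_mem' _ _ := ⟨0, by simp⟩
  neg_mem' {a} ha y hy := by
    obtain ⟨m, hm⟩ := ha y hy
    exact ⟨-m, by rw [inner_neg_right, ← hm, Int.cast_neg]⟩

variable {S T : Set E}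

theorem mem_integralDual {x : E} :
    x ∈ integralDual S ↔ ∀ y ∈ S, ⟪y, x⟫_ℝ ∈ range ((↑) : ℤ → ℝ) := Iff.rfl

theorem integralDual_anti (h : S ⊆ T) : integralDual T ≤ integralDual S :=
  fun _ hx y hy => hx y (h hy)

theorem subset_integralDual_comm : S ⊆ integralDual T ↔ T ⊆ integralDual S := by
  simp only [subset_def, SetLike.mem_coe, mem_integralDual]
  exact ⟨fun h y hy x hx => real_inner_comm x y ▸ h x hx y hy,
    fun h x hx y hy => real_inner_comm y x ▸ h y hy x hx⟩

theorem isClosed_integralDual (S : Set E) : IsClosed (integralDual S : Set E) := by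
  have : (integralDual S : Set E) = ⋂ y ∈ S, (fun x => ⟪y, x⟫_ℝ) ⁻¹' range ((↑) : ℤ → ℝ) := by
    ext; simp [mem_integralDual]
  rw [this]
  exact isClosed_biInter fun y _ => Int.isClosedEmbedding_coe_real.isClosed_range.preimage
    (continuous_const.inner continuous_id)

theorem lineality_integralDual (S : Set E) : (integralDual S).lineality = (span ℝ S)ᗮ := by
  refine le_antisymm (fun x hx => ?_) fun x hx t y hy =>
    ⟨0, by rw [inner_smul_right, inner_right_of_mem_orthogonal (subset_span hy) hx]; simp⟩
  refine (isOrtho_span.mpr fun y hy z hz => ?_).ge (subset_span (mem_singleton x))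
  rw [mem_singleton_iff.mp hz]
  by_contra hyx
  -- `⟪y, t • x⟫` is an integer for every `t`, which fails for `t = 1 / (2 ⟪y, x⟫)`.
  obtain ⟨k, hk⟩ := hx (1 / (2 * ⟪y, x⟫_ℝ)) y hy
  rw [real_inner_smul_right, one_div_mul_eq_div, div_mul_cancel_right₀ hyx] at hk
  have : (2 * k : ℤ) = 1 := by exact_mod_cast (by linarith : (2 * k : ℝ) = 1)
  omega

theorem Orthonormal.closure_range_le_integralDual {ι : Type*} {v : ι → E}
    (hv : Orthonormal ℝ v) :
    AddSubgroup.closure (range v) ≤ integralDual (AddSubgroup.closure (range v)) := by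
  classical
  have hrange : range v ⊆ integralDual (range v) := by
    rintro _ ⟨i, rfl⟩ _ ⟨j, rfl⟩
    rw [orthonormal_iff_ite.mp hv]
    split_ifs
    exacts [⟨1, Int.cast_one⟩, ⟨0, Int.cast_zero⟩]
  rw [AddSubgroup.closure_le, subset_integralDual_comm, SetLike.coe_subset_coe,
    AddSubgroup.closure_le, subset_integralDual_comm]
  exact hrange

variable [FiniteDimensional ℝ E]

/-- `Wᗮ` is the lineality space of the closed subgroup `integralDual (Λ ∩ W)`, which
contains `Λ`. -/
theorem AddSubgroup.span_inter_orthogonal_eq {Λ : AddSubgroup E} (hΛ : span ℝ (Λ : Set E) = ⊤)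
    (hint : Λ ≤ integralDual Λ) {W : Submodule ℝ E} (hW : span ℝ ((Λ : Set E) ∩ W) = W) :
    span ℝ ((Λ : Set E) ∩ Wᗮ) = Wᗮ := by
  have hlin : (integralDual ((Λ : Set E) ∩ W)).lineality = Wᗮ := by
    rw [lineality_integralDual, hW]
  rw [← hlin]
  exact AddSubgroup.span_inter_lineality_eq (isClosed_integralDual _) hΛ
    (hint.trans (integralDual_anti inter_subset_left))

end IntegralDual

namespace QuotientAddGroup

variable {E : Type*}

section Normed

variable [NormedAddCommGroup E] [NormedSpace ℝ E] [FiniteDimensional ℝ E] {Λ : AddSubgroup E}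

theorem exists_image_mk_eq_image_inter_closedBall {U : Submodule ℝ E}
    (hU : U ≤ span ℝ ((Λ : Set E) ∩ U)) :
    ∃ R, ((↑) : E → E ⧸ Λ) '' U = ((↑) : E → E ⧸ Λ) '' (U ∩ closedBall 0 R) := by
  obtain ⟨R, hR⟩ := (Λ ⊓ U.toAddSubgroup).exists_norm_sub_le_of_mem_span
  refine ⟨R, (image_mono inter_subset_left).antisymm' ?_⟩
  rintro _ ⟨x, hx, rfl⟩
  obtain ⟨y, ⟨hyΛ, hyU⟩, hxy⟩ := hR x (hU hx)
  refine ⟨x - y, ⟨U.sub_mem hx hyU, mem_closedBall_zero_iff.mpr hxy⟩, ?_⟩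
  rw [mk_sub, (eq_zero_iff y).mpr hyΛ, sub_zero]

theorem isCompact_image_mk {U : Submodule ℝ E} (hU : U ≤ span ℝ ((Λ : Set E) ∩ U)) :
    IsCompact (((↑) : E → E ⧸ Λ) '' U) := by
  obtain ⟨R, hR⟩ := exists_image_mk_eq_image_inter_closedBall hU
  rw [hR]
  exact ((isCompact_closedBall 0 R).inter_left U.closed_of_finiteDimensional).image continuous_mk

end Normed

variable [NormedAddCommGroup E] [InnerProductSpace ℝ E] [FiniteDimensional ℝ E] {Λ : AddSubgroup E}

theorem finite_inter_image_mk_orthogonal_lineality {H : AddSubgroup (E ⧸ Λ)}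
    (hH : IsClosed (H : Set (E ⧸ Λ))) (hU : (H.comap (mk' Λ)).linealityᗮ ≤
      span ℝ ((Λ : Set E) ∩ (H.comap (mk' Λ)).linealityᗮ)) :
    ((H : Set (E ⧸ Λ)) ∩ ((↑) : E → E ⧸ Λ) '' (H.comap (mk' Λ)).linealityᗮ).Finite := by
  obtain ⟨R, hR⟩ := exists_image_mk_eq_image_inter_closedBall hU
  rw [hR, inter_comm, ← image_inter_preimage]
  refine Finite.image _ ((AddSubgroup.finite_inter_orthogonal_lineality_inter_closedBall
    (Γ := H.comap (mk' Λ)) (hH.preimage continuous_mk) R).subset ?_)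
  rintro x ⟨⟨hxU, hxR⟩, hxH⟩
  exact ⟨⟨hxH, hxU⟩, hxR⟩

end QuotientAddGroup

theorem torus_orthogonal_complement_subgroup_general
    {n : ℕ} (Λ : AddSubgroup (EuclideanSpace ℝ (Fin n)))
    (hrat : ∃ b : OrthonormalBasis (Fin n) ℝ (EuclideanSpace ℝ (Fin n)),
      Submodule.span ℝ
        (((AddSubgroup.closure (Set.range b)) ⊓ Λ : AddSubgroup (EuclideanSpace ℝ (Fin n))) :
          Set (EuclideanSpace ℝ (Fin n))) = ⊤)
    (H : AddSubgroup (EuclideanSpace ℝ (Fin n) ⧸ Λ))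
    (hH : IsClosed (H : Set (EuclideanSpace ℝ (Fin n) ⧸ Λ))) :
    ∃ K : AddSubgroup (EuclideanSpace ℝ (Fin n) ⧸ Λ),
      -- `K = H^⊥` is the image under the exponential map of the orthogonal
      -- complement of the Lie algebra of `H`
      (K : Set (EuclideanSpace ℝ (Fin n) ⧸ Λ)) =
        (QuotientAddGroup.mk (s := Λ)) ''
          ((Submodule.span ℝ
            {ξ : EuclideanSpace ℝ (Fin n) |
              ∀ t : ℝ, (QuotientAddGroup.mk (t • ξ) : EuclideanSpace ℝ (Fin n) ⧸ Λ) ∈ H})ᗮ :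
            Set (EuclideanSpace ℝ (Fin n))) ∧
      IsCompact (K : Set (EuclideanSpace ℝ (Fin n) ⧸ Λ)) ∧
      IsConnected (K : Set (EuclideanSpace ℝ (Fin n) ⧸ Λ)) ∧
      ((H : Set (EuclideanSpace ℝ (Fin n) ⧸ Λ)) ∩ (K : Set _)).Finite := by
  obtain ⟨b, hb⟩ := hrat
  set Λ₀ := AddSubgroup.closure (Set.range b) ⊓ Λ
  set Γ := H.comap (QuotientAddGroup.mk' Λ)
  have hΓ : IsClosed (Γ : Set (EuclideanSpace ℝ (Fin n))) :=
    hH.preimage QuotientAddGroup.continuous_mk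
  have hΛ₀Γ : Λ₀ ≤ Γ := fun x hx => by simp [Γ, (QuotientAddGroup.eq_zero_iff x).mpr hx.2]
  have hint : Λ₀ ≤ integralDual Λ₀ := inf_le_left.trans
    (b.orthonormal.closure_range_le_integralDual.trans (integralDual_anti inf_le_left))
  have hrational : span ℝ ((Λ₀ : Set _) ∩ Γ.linealityᗮ) = Γ.linealityᗮ :=
    Λ₀.span_inter_orthogonal_eq hb hint (Λ₀.span_inter_lineality_eq hΓ hb hΛ₀Γ)
  have hcover : Γ.linealityᗮ ≤ span ℝ ((Λ : Set _) ∩ Γ.linealityᗮ) :=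
    hrational.ge.trans (span_mono (inter_subset_inter_left _ fun _ hx => hx.2))
  refine ⟨Γ.linealityᗮ.toAddSubgroup.map (QuotientAddGroup.mk' Λ), ?_, ?_, ?_, ?_⟩
  · change _ = _ '' (((span ℝ (Γ.lineality : Set (EuclideanSpace ℝ (Fin n))))ᗮ :
      Submodule ℝ (EuclideanSpace ℝ (Fin n))) : Set (EuclideanSpace ℝ (Fin n)))
    rw [span_eq]
    rfl
  · exact QuotientAddGroup.isCompact_image_mk hcover
  · exact Γ.linealityᗮ.isPathConnected.isConnected.image _
      QuotientAddGroup.continuous_mk.continuousOn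
  · exact QuotientAddGroup.finite_inter_image_mk_orthogonal_lineality hH hcover

/-- Let `G` be an `n`-dimensional torus, modeled as `𝔤 ⧸ Λ` where
`𝔤 = EuclideanSpace ℝ (Fin n)` (with its Euclidean metric) and `Λ` is the integral
lattice (discrete, of full rank).  The metric is *rational*: there is an orthonormal
basis whose generated lattice meets `Λ` in a full-rank (rank `n`) sublattice.
Then for every closed subgroup `H` of `G`, the image `H^⊥` of the orthogonal
complement of `Lie H` under the exponential (= quotient) map is a compact connected
subgroup of `G`, and `H ∩ H^⊥` is finite. -/
theorem torus_orthogonal_complement_subgroup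
    {n : ℕ} (Λ : AddSubgroup (EuclideanSpace ℝ (Fin n)))
    (hdisc : DiscreteTopology Λ)
    (hfull : Submodule.span ℝ (Λ : Set (EuclideanSpace ℝ (Fin n))) = ⊤)
    (hrat : ∃ b : OrthonormalBasis (Fin n) ℝ (EuclideanSpace ℝ (Fin n)),
      Submodule.span ℝ
        (((AddSubgroup.closure (Set.range b)) ⊓ Λ : AddSubgroup (EuclideanSpace ℝ (Fin n))) :
          Set (EuclideanSpace ℝ (Fin n))) = ⊤)
    (H : AddSubgroup (EuclideanSpace ℝ (Fin n) ⧸ Λ))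
    (hH : IsClosed (H : Set (EuclideanSpace ℝ (Fin n) ⧸ Λ))) :
    ∃ K : AddSubgroup (EuclideanSpace ℝ (Fin n) ⧸ Λ),
      -- `K = H^⊥` is the image under the exponential map of the orthogonal
      -- complement of the Lie algebra of `H`
      (K : Set (EuclideanSpace ℝ (Fin n) ⧸ Λ)) =
        (QuotientAddGroup.mk (s := Λ)) ''
          ((Submodule.span ℝ
            {ξ : EuclideanSpace ℝ (Fin n) |
              ∀ t : ℝ, (QuotientAddGroup.mk (t • ξ) : EuclideanSpace ℝ (Fin n) ⧸ Λ) ∈ H})ᗮ :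
            Set (EuclideanSpace ℝ (Fin n))) ∧
      IsCompact (K : Set (EuclideanSpace ℝ (Fin n) ⧸ Λ)) ∧
      IsConnected (K : Set (EuclideanSpace ℝ (Fin n) ⧸ Λ)) ∧
      ((H : Set (EuclideanSpace ℝ (Fin n) ⧸ Λ)) ∩ (K : Set _)).Finite :=
  torus_orthogonal_complement_subgroup_general Λ hrat H hH
end

section
/- Let G be a torus acting on a manifold V with a G-invariant almost complex structure J such that every G-orbit is totally real (ξ ∩ Jξ = 0 for any subspace ξ of the tangent space of an orbit). Let {V_H}_{H∈A} be a good open covering as above, and on V_H let Tℱ_H denote the tangent bundle along H^⊥-orbits. Then the map Tℱ_H ⊗_ℝ ℂ → TV_H, v ⊗ (a + bi) ↦ a v + b Jv, is an injective bundle map, and with a G-invariant J-compatible metric there is a canonical isomorphism of Hermitian vector bundles TV_H ≅ (Tℱ_H ⊗ ℂ) ⊕ T'V_H, where T'V_H is the orthogonal complement, inducing ∧^{0,•}T*V_H ≅ (∧^• T*ℱ_H ⊗ ℂ) ⊗ ∧^{0,•}(T'V_H)*. -/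
open RealInnerProductSpace

/-! At a point, `J` is an isometry with `J² = -1` and the orbit directions `F` satisfy
`F ∩ JF = 0`. Hence `(u, v) ↦ u + Jv` is injective on `F × F`, and its image
`W = F + JF` satisfies `JW = W`. Since `J` is an isometry with `J⁻¹ = -J`, the orthogonal
complement `Wᗮ` is `J`-stable as well, and finite dimensionality gives `W ⊕ Wᗮ = E`. -/

namespace Submodule

section SquareNegOne

variable {R M : Type*} [Ring R] [AddCommGroup M] [Module R M] {J : M →ₗ[R] M}

theorem map_map_of_apply_apply_eq_neg (hJ : ∀ v, J (J v) = -v) (S : Submodule R M) :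
    (S.map J).map J = S := by
  have hJJ : J ∘ₗ J = -LinearMap.id := LinearMap.ext hJ
  rw [← map_comp, hJJ, Submodule.map_neg, map_id]

theorem map_eq_of_map_le_of_apply_apply_eq_neg (hJ : ∀ v, J (J v) = -v)
    {S : Submodule R M} (h : S.map J ≤ S) : S.map J = S :=
  le_antisymm h <| calc
    S = (S.map J).map J := (map_map_of_apply_apply_eq_neg hJ S).symm
    _ ≤ S.map J := map_mono h

theorem map_sup_map_of_apply_apply_eq_neg (hJ : ∀ v, J (J v) = -v) (S : Submodule R M) :
    (S ⊔ S.map J).map J = S ⊔ S.map J := by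
  rw [map_sup, map_map_of_apply_apply_eq_neg hJ, sup_comm]

theorem injective_add_apply_of_disjoint_map (hJ : Function.Injective J)
    {S : Submodule R M} (hS : Disjoint S (S.map J)) :
    Function.Injective (fun p : S × S => (p.1 : M) + J p.2) := by
  have hdisj : Disjoint (LinearMap.range S.subtype) (LinearMap.range (J ∘ₗ S.subtype)) := by
    rwa [range_subtype, LinearMap.range_comp, range_subtype]
  have hker : LinearMap.ker (S.subtype.coprod (J ∘ₗ S.subtype)) = ⊥ := by
    rw [LinearMap.ker_coprod_of_disjoint_range _ _ hdisj, ker_subtype,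
      LinearMap.ker_comp, LinearMap.ker_eq_bot.mpr hJ, comap_bot, ker_subtype, prod_bot]
  exact LinearMap.ker_eq_bot.mp hker

end SquareNegOne

theorem map_orthogonal_le_of_inner_map_map {E : Type*} [NormedAddCommGroup E]
    [InnerProductSpace ℝ E] {J : E →ₗ[ℝ] E} (hJ : ∀ v w, ⟪J v, J w⟫ = ⟪v, w⟫)
    {W : Submodule ℝ E} (hW : W ≤ W.map J) : Wᗮ.map J ≤ Wᗮ := by
  rintro _ ⟨w, hw, rfl⟩ u hu
  obtain ⟨u', hu', rfl⟩ := hW hu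
  rw [hJ]
  exact hw u' hu'

end Submodule

/-- Let a torus `G` act on `V` with a `G`-invariant almost complex
structure `J` and a `G`-invariant `J`-compatible metric, such that every `G`-orbit
is totally real.  With `V` realized inside the (tangent model) inner product space
`E`, `J x` the almost complex structure at `x` and `F x = Tℱ_H|_x` the tangent
space along the `H^⊥`-orbit foliation, the map
`Tℱ_H ⊗_ℝ ℂ → TV_H`, `v ⊗ (a+bi) ↦ a v + b (J v)`, is injective, and
`TV_H ≅ (Tℱ_H ⊗ ℂ) ⊕ T'V_H` as Hermitian vector bundles, where
`T'V_H = (Tℱ_H ⊗ ℂ)^⊥` is `J`-invariant; this induces the isomorphism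
`∧^{0,•}T*V_H ≅ (∧^•T*ℱ_H ⊗ ℂ) ⊗ ∧^{0,•}(T'V_H)*`. -/
theorem totally_real_orbits_complexified_splitting
    {E : Type*} [NormedAddCommGroup E] [InnerProductSpace ℝ E]
    [FiniteDimensional ℝ E]
    (V : Set E) (J : E → E →ₗ[ℝ] E) (F : E → Submodule ℝ E)
    -- `J` is an almost complex structure compatible with the metric
    (hJ2 : ∀ x ∈ V, ∀ v : E, J x (J x v) = -v)
    (hJmet : ∀ x ∈ V, ∀ v w : E, ⟪J x v, J x w⟫ = ⟪v, w⟫)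
    -- the orbits are totally real: `ξ ∩ Jξ = 0` for every subspace `ξ` of the
    -- tangent space `F x` of the orbit directions
    (htotreal : ∀ x ∈ V, ∀ ξ : Submodule ℝ E, ξ ≤ F x →
      ξ ⊓ ξ.map (J x) = ⊥) :
    ∀ x ∈ V,
      -- injectivity of `Tℱ ⊗_ℝ ℂ → TV`, `(u, v) ↦ u + J v`
      Function.Injective (fun p : (F x) × (F x) => (p.1 : E) + J x (p.2 : E)) ∧
      -- the complexified image `W = F + J F` is `J`-invariant, as is its
      -- orthogonal complement, and together they give an orthogonal splitting
      (Submodule.map (J x) (F x ⊔ (F x).map (J x)) = F x ⊔ (F x).map (J x)) ∧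
      (Submodule.map (J x) (F x ⊔ (F x).map (J x))ᗮ = (F x ⊔ (F x).map (J x))ᗮ) ∧
      ((F x ⊔ (F x).map (J x)) ⊔ (F x ⊔ (F x).map (J x))ᗮ = ⊤) ∧
      ((F x ⊔ (F x).map (J x)) ⊓ (F x ⊔ (F x).map (J x))ᗮ = ⊥) := by
  intro x hx
  have hJ := hJ2 x hx
  have hJinj : Function.Injective (J x) :=
    Function.LeftInverse.injective (g := fun v => -J x v) fun v => by simp [hJ]
  have hWJ := Submodule.map_sup_map_of_apply_apply_eq_neg hJ (F x)
  refine ⟨Submodule.injective_add_apply_of_disjoint_map hJinj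
      (disjoint_iff.mpr (htotreal x hx (F x) le_rfl)), hWJ,
    Submodule.map_eq_of_map_le_of_apply_apply_eq_neg hJ
      (Submodule.map_orthogonal_le_of_inner_map_map (hJmet x hx) hWJ.ge),
    Submodule.sup_orthogonal_of_hasOrthogonalProjection, Submodule.inf_orthogonal_eq_bot _⟩
end
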